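/- For every integer r ≥ 8, the number n whose binary representation is 1101111 followed by r zeros followed by 1101111 (i.e., n = 111·(2^{r+7} + 1)) satisfies s_2(n) = s_2(n^2) = 12. In particular, there are infinitely many odd n with s_2(n) = s_2(n^2) = 12. -/

import Mathlib

/-!
Since `111 < 2 ^ (r + 7)`, the binary expansion of `111 * (2 ^ (r + 7) + 1)` is two copies of
that of `111` side by side. Its square is `12321 * (2 ^ (2r + 14) + 2 ^ (r + 8) + 1)`, and as
`2 * 12321 < 2 ^ (r + 7)` the three summands do not overlap either, so the digit sum is
`3 * s₂(12321) = 3 * 4 = 12`.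
-/

namespace Nat

theorem digits_sum_add_base_pow_mul {b k a m : ℕ} (hb : 1 < b) (ha : a < b ^ k) :
    (b.digits (a + b ^ k * m)).sum = (b.digits a).sum + (b.digits m).sum := by
  rcases m.eq_zero_or_pos with rfl | hm
  · simp
  obtain ⟨j, hj⟩ := Nat.exists_eq_add_of_le ((digits_length_le_iff hb a).2 ha)
  rw [hj, ← digits_append_zeroes_append_digits hb hm]
  simp

theorem digits_sum_mul_base_pow_add_one {b k a : ℕ} (hb : 1 < b) (ha : a < b ^ k) :
    (b.digits (a * (b ^ k + 1))).sum = 2 * (b.digits a).sum := by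
  rw [show a * (b ^ k + 1) = a + b ^ k * a by ring, digits_sum_add_base_pow_mul hb ha]
  ring

theorem digits_sum_sq_mul_base_pow_add_one {b k a : ℕ} (hb : 1 < b) (ha : 2 * a ^ 2 < b ^ k) :
    (b.digits ((a * (b ^ k + 1)) ^ 2)).sum =
      2 * (b.digits (a ^ 2)).sum + (b.digits (2 * a ^ 2)).sum := by
  have hsq : a ^ 2 < b ^ k := by omega
  rw [show (a * (b ^ k + 1)) ^ 2 = a ^ 2 + b ^ k * (2 * a ^ 2 + b ^ k * a ^ 2) by ring,
    digits_sum_add_base_pow_mul hb hsq, digits_sum_add_base_pow_mul hb ha]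
  ring

theorem digits_two_sum_two_mul (n : ℕ) : (Nat.digits 2 (2 * n)).sum = (Nat.digits 2 n).sum := by
  rcases n.eq_zero_or_pos with rfl | hn
  · simp
  simp [digits_base_mul one_lt_two hn]

theorem digits_two_sum_sq_mul_two_pow_add_one {k a : ℕ} (ha : 2 * a ^ 2 < 2 ^ k) :
    (Nat.digits 2 ((a * (2 ^ k + 1)) ^ 2)).sum = 3 * (Nat.digits 2 (a ^ 2)).sum := by
  rw [digits_sum_sq_mul_base_pow_add_one one_lt_two ha, digits_two_sum_two_mul]
  ring

end Nat

theorem k12_family :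
    (∀ r : ℕ, 8 ≤ r →
      (Nat.digits 2 (111 * (2 ^ (r + 7) + 1))).sum = 12 ∧
      (Nat.digits 2 ((111 * (2 ^ (r + 7) + 1)) ^ 2)).sum = 12) ∧
    {n : ℕ | Odd n ∧ (Nat.digits 2 n).sum = 12 ∧
      (Nat.digits 2 (n ^ 2)).sum = 12}.Infinite := by
  have family : ∀ r : ℕ, 8 ≤ r →
      (Nat.digits 2 (111 * (2 ^ (r + 7) + 1))).sum = 12 ∧
      (Nat.digits 2 ((111 * (2 ^ (r + 7) + 1)) ^ 2)).sum = 12 := by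
    intro r hr
    have hbig : 2 * 111 ^ 2 < 2 ^ (r + 7) :=
      lt_of_lt_of_le (by norm_num) (Nat.pow_le_pow_right two_pos (by omega : 15 ≤ r + 7))
    refine ⟨?_, ?_⟩
    · rw [Nat.digits_sum_mul_base_pow_add_one one_lt_two (by omega)]
      norm_num
    · rw [Nat.digits_two_sum_sq_mul_two_pow_add_one hbig]
      norm_num
  refine ⟨family, Set.infinite_of_injective_forall_mem
    (f := fun r : ℕ => 111 * (2 ^ (r + 8 + 7) + 1)) ?_ fun r => ?_⟩
  · intro r s hrs
    have h := Nat.pow_right_injective le_rfl (Nat.eq_of_mul_eq_mul_left (by norm_num)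
      (Nat.add_right_cancel hrs))
    omega
  · exact ⟨(by decide : Odd 111).mul ((Nat.even_pow.2 ⟨even_two, by omega⟩).add_one),
      family (r + 8) (by omega)⟩
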